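/- arXiv:2005.12760 — 5 statements merged into one kernel-verified Lean document; each statement's English description precedes it below -/
import Mathlib

section
/- Let f : M → M' be a homomorphism of modules with negation carrying surpassing relations. Then the relation S on M' defined by: b S b' if and only if b = b' or there exists c ∈ M with b'(-)b ≼ f(c), is an equivalence relation on M' (reflexive, symmetric, and transitive); moreover if b₁'(-)b₁ ≼ f(c) and b₂'(-)b₂ ≼ f(c'), then (b₁' + b₂')(-)( b₁ + b₂) ≼ f(c + c'). (S is the systemic congruence image of f.) -/
/-- A module with negation carrying a surpassing relation: an additive
commutative monoid with an additive monoid automorphism `neg` of order ≤ 2,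
and a preorder `le` (the surpassing relation ≼) satisfying 0 ≼ c°, and
compatibility with the negation and with addition. -/
structure NegModule (M : Type*) [AddCommMonoid M] where
  neg : M → M
  neg_add : ∀ a b : M, neg (a + b) = neg a + neg b
  neg_zero : neg 0 = 0
  neg_neg : ∀ a : M, neg (neg a) = a
  le : M → M → Prop
  le_refl : ∀ a : M, le a a
  le_trans : ∀ a b c : M, le a b → le b c → le a c
  zero_le_circ : ∀ c : M, le 0 (c + neg c)
  le_neg : ∀ a b : M, le a b → le (neg a) (neg b)
  le_add : ∀ a b a' b' : M, le a b → le a' b' → le (a + a') (b + b')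

/-- A ≼-morphism of modules with negation carrying surpassing relations. -/
def IsPrecMorphism {M N : Type*} [AddCommMonoid M] [AddCommMonoid N]
    (SM : NegModule M) (SN : NegModule N) (f : M → N) : Prop :=
  f 0 = 0 ∧ (∀ b : M, f (SM.neg b) = SN.neg (f b)) ∧
    (∀ b b' : M, SN.le (f (b + b')) (f b + f b')) ∧
    (∀ b b' : M, SM.le b b' → SN.le (f b) (f b'))

/-- A homomorphism of modules with negation carrying surpassing relations. -/
def IsNegHom {M N : Type*} [AddCommMonoid M] [AddCommMonoid N]
    (SM : NegModule M) (SN : NegModule N) (f : M → N) : Prop :=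
  f 0 = 0 ∧ (∀ b : M, f (SM.neg b) = SN.neg (f b)) ∧
    (∀ b b' : M, f (b + b') = f b + f b') ∧
    (∀ b b' : M, SM.le b b' → SN.le (f b) (f b'))

namespace NegModule

variable {M : Type*} [AddCommMonoid M] (S : NegModule M)

theorem neg_add_neg_add (b₁ b₁' b₂ b₂' : M) :
    (b₁' + b₂') + S.neg (b₁ + b₂) = (b₁' + S.neg b₁) + (b₂' + S.neg b₂) := by
  rw [S.neg_add]; abel

theorem neg_add_neg (b b' : M) : S.neg (b' + S.neg b) = b + S.neg b' := by
  rw [S.neg_add, S.neg_neg, add_comm]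

theorem le_add_circ (a c : M) : S.le a (a + (c + S.neg c)) := by
  simpa only [add_zero] using S.le_add _ _ _ _ (S.le_refl a) (S.zero_le_circ c)

/-- Telescoping through `b₂`: the two differences sum to `b₃ (-) b₁` plus the quasi-zero `b₂°`. -/
theorem le_add_neg_add_add_neg (b₁ b₂ b₃ : M) :
    S.le (b₃ + S.neg b₁) ((b₂ + S.neg b₁) + (b₃ + S.neg b₂)) := by
  have h := S.le_add_circ (b₃ + S.neg b₁) b₂
  rwa [show (b₃ + S.neg b₁) + (b₂ + S.neg b₂) = (b₂ + S.neg b₁) + (b₃ + S.neg b₂) by abel] at h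

end NegModule

def systemicCongruenceImage {M M' : Type*} [AddCommMonoid M'] (SM' : NegModule M') (f : M → M')
    (b b' : M') : Prop :=
  b = b' ∨ ∃ c : M, SM'.le (b' + SM'.neg b) (f c)

section SystemicCongruenceImage

variable {M M' : Type*} [AddCommMonoid M] [AddCommMonoid M']
  {SM : NegModule M} {SM' : NegModule M'} {f : M → M'}

theorem IsNegHom.map_neg (hf : IsNegHom SM SM' f) (b : M) : f (SM.neg b) = SM'.neg (f b) :=
  hf.2.1 b

theorem IsNegHom.map_add (hf : IsNegHom SM SM' f) (b b' : M) : f (b + b') = f b + f b' :=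
  hf.2.2.1 b b'

theorem IsNegHom.le_add_neg_add (hf : IsNegHom SM SM' f) {b₁ b₁' b₂ b₂' : M'} {c c' : M}
    (h₁ : SM'.le (b₁' + SM'.neg b₁) (f c)) (h₂ : SM'.le (b₂' + SM'.neg b₂) (f c')) :
    SM'.le ((b₁' + b₂') + SM'.neg (b₁ + b₂)) (f (c + c')) := by
  rw [SM'.neg_add_neg_add, hf.map_add]
  exact SM'.le_add _ _ _ _ h₁ h₂

theorem IsNegHom.le_neg_add_of_le_add_neg (hf : IsNegHom SM SM' f) {b b' : M'} {c : M}
    (h : SM'.le (b' + SM'.neg b) (f c)) : SM'.le (b + SM'.neg b') (f (SM.neg c)) := by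
  rw [← SM'.neg_add_neg, hf.map_neg]
  exact SM'.le_neg _ _ h

theorem IsNegHom.le_add_neg_trans (hf : IsNegHom SM SM' f) {b₁ b₂ b₃ : M'} {c c' : M}
    (h₁ : SM'.le (b₂ + SM'.neg b₁) (f c)) (h₂ : SM'.le (b₃ + SM'.neg b₂) (f c')) :
    SM'.le (b₃ + SM'.neg b₁) (f (c + c')) := by
  rw [hf.map_add]
  exact SM'.le_trans _ _ _ (SM'.le_add_neg_add_add_neg b₁ b₂ b₃) (SM'.le_add _ _ _ _ h₁ h₂)

theorem IsNegHom.equivalence_systemicCongruenceImage (hf : IsNegHom SM SM' f) :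
    Equivalence (systemicCongruenceImage SM' f) where
  refl _ := Or.inl rfl
  symm := by
    rintro b b' (rfl | ⟨c, hc⟩)
    · exact Or.inl rfl
    · exact Or.inr ⟨SM.neg c, hf.le_neg_add_of_le_add_neg hc⟩
  trans := by
    rintro b₁ b₂ b₃ (rfl | ⟨c, hc⟩) (rfl | ⟨c', hc'⟩)
    · exact Or.inl rfl
    · exact Or.inr ⟨c', hc'⟩
    · exact Or.inr ⟨c, hc⟩
    · exact Or.inr ⟨c + c', hf.le_add_neg_trans hc hc'⟩

end SystemicCongruenceImage

/-- The systemic congruence image of a homomorphism f : M → M' is an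
equivalence relation on M', and it is additive. -/
theorem systemic_congruence_image_equivalence
    {M M' : Type*} [AddCommMonoid M] [AddCommMonoid M']
    (SM : NegModule M) (SM' : NegModule M') (f : M → M')
    (hf : IsNegHom SM SM' f) :
    Equivalence (fun b b' : M' =>
      b = b' ∨ ∃ c : M, SM'.le (b' + SM'.neg b) (f c)) ∧
    (∀ (b₁ b₁' b₂ b₂' : M') (c c' : M),
      SM'.le (b₁' + SM'.neg b₁) (f c) → SM'.le (b₂' + SM'.neg b₂) (f c') →
      SM'.le ((b₁' + b₂') + SM'.neg (b₁ + b₂)) (f (c + c'))) :=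
  ⟨hf.equivalence_systemicCongruenceImage, fun _ _ _ _ _ _ => hf.le_add_neg_add⟩
end

section
/- Let f : M → M' be a homomorphism of modules with negation carrying surpassing relations. Then the following three subsets of M coincide: {b₀(-)b₁ : b₀, b₁ ∈ M with f(b₀) ≼ f(b₁)}, the null-module kernel {m ∈ M : 0 ≼ f(m)}, and {b₀(-)b₁ : b₀, b₁ ∈ M with 0 ≼ f(b₀)(-)f(b₁)}. -/
namespace NegModule

variable {M : Type*} [AddCommMonoid M] (S : NegModule M)

theorem zero_le_neg {a : M} (h : S.le 0 a) : S.le 0 (S.neg a) := by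
  simpa only [S.neg_zero] using S.le_neg 0 a h

theorem zero_le_add_neg_of_le {a b : M} (h : S.le a b) : S.le 0 (a + S.neg b) :=
  S.le_trans _ _ _ (S.zero_le_circ a) (S.le_add _ _ _ _ (S.le_refl a) (S.le_neg _ _ h))

end NegModule

namespace IsNegHom

variable {M M' : Type*} [AddCommMonoid M] [AddCommMonoid M']
  {SM : NegModule M} {SM' : NegModule M'} {f : M → M'}

theorem map_zero (hf : IsNegHom SM SM' f) : f 0 = 0 := hf.1

theorem map_neg_s7 (hf : IsNegHom SM SM' f) (b : M) : f (SM.neg b) = SM'.neg (f b) := hf.2.1 b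

theorem map_add_neg (hf : IsNegHom SM SM' f) (b₀ b₁ : M) :
    f (b₀ + SM.neg b₁) = f b₀ + SM'.neg (f b₁) := by
  rw [hf.2.2.1, hf.map_neg_s7]

end IsNegHom

/-- For a homomorphism f : M → M', the image of the ≼-precongruence kernel
under ψ(b₀,b₁) = b₀(-)b₁, the null-module kernel, and the image of the
precongruence kernel under ψ all coincide. -/
theorem kernels_coincide
    {M M' : Type*} [AddCommMonoid M] [AddCommMonoid M']
    (SM : NegModule M) (SM' : NegModule M') (f : M → M')
    (hf : IsNegHom SM SM' f) :
    ({x : M | ∃ b₀ b₁ : M, SM'.le (f b₀) (f b₁) ∧ x = b₀ + SM.neg b₁} =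
      {m : M | SM'.le 0 (f m)}) ∧
    ({m : M | SM'.le 0 (f m)} =
      {x : M | ∃ b₀ b₁ : M, SM'.le 0 (f b₀ + SM'.neg (f b₁)) ∧
        x = b₀ + SM.neg b₁}) := by
  refine ⟨Set.ext fun x => ⟨?_, fun hx => ?_⟩, Set.ext fun x => ⟨fun hx => ?_, ?_⟩⟩
  · rintro ⟨b₀, b₁, hle, rfl⟩
    rw [Set.mem_ofPred_eq, hf.map_add_neg]
    exact SM'.zero_le_add_neg_of_le hle
  · refine ⟨0, SM.neg x, ?_, by rw [SM.neg_neg, zero_add]⟩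
    rw [hf.map_zero, hf.map_neg_s7]
    exact SM'.zero_le_neg hx
  · refine ⟨x, 0, ?_, by rw [SM.neg_zero, add_zero]⟩
    rwa [hf.map_zero, SM'.neg_zero, add_zero]
  · rintro ⟨b₀, b₁, hle, rfl⟩
    rwa [Set.mem_ofPred_eq, hf.map_add_neg]
end

section
/- Let d₂ : M₂ → M₁ and d₁ : M₁ → M₀ be homomorphisms of modules with negation carrying surpassing relations, and assume the ≽-chain condition: every b ∈ M₁ with b ≼ d₂(c) for some c ∈ M₂ satisfies 0 ≼ d₁(b). Let Z = {b ∈ M₁ : 0 ≼ d₁(b)}. Then Z = {b ∈ M₁ : b ≼ d₂(c) for some c ∈ M₂} (≽-exactness) if and only if for all b, b' ∈ Z there exists c ∈ M₂ with b'(-)b ≼ d₂(c) (i.e., the systemic homology H_{sys} at M₁ is trivial). -/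
/-!
If every cycle is surpassed by a boundary, then so is `b' (-) b` for cycles `b, b'`, because `d₂`
commutes with `+` and `(-)`. Conversely, `0 ≼ d₂ 0` makes `0` a cycle by the chain condition, so
every cycle `b = b (-) 0` is surpassed by a boundary.
-/

namespace IsNegHom

variable {M N : Type*} [AddCommMonoid M] [AddCommMonoid N] {SM : NegModule M} {SN : NegModule N}
  {f : M → N}

theorem zero_le_map_zero (hf : IsNegHom SM SN f) : SN.le 0 (f 0) :=
  hf.1 ▸ SN.le_refl 0

theorem le_map_add_neg (hf : IsNegHom SM SN f) {b b' : N} {c c' : M}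
    (hb : SN.le b (f c)) (hb' : SN.le b' (f c')) :
    SN.le (b' + SN.neg b) (f (c' + SM.neg c)) := by
  rw [hf.2.2.1, hf.2.1]
  exact SN.le_add _ _ _ _ hb' (SN.le_neg _ _ hb)

end IsNegHom

theorem exact_iff_systemic_homology_trivial_general
    {M₂ M₁ M₀ : Type*} [AddCommMonoid M₂] [AddCommMonoid M₁] [AddCommMonoid M₀]
    (S₂ : NegModule M₂) (S₁ : NegModule M₁) (S₀ : NegModule M₀)
    (d₂ : M₂ → M₁) (d₁ : M₁ → M₀)
    (hd₂ : IsNegHom S₂ S₁ d₂)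
    (hchain : ∀ (b : M₁) (c : M₂), S₁.le b (d₂ c) → S₀.le 0 (d₁ b)) :
    ({b : M₁ | S₀.le 0 (d₁ b)} = {b : M₁ | ∃ c : M₂, S₁.le b (d₂ c)}) ↔
      (∀ b b' : M₁, S₀.le 0 (d₁ b) → S₀.le 0 (d₁ b') →
        ∃ c : M₂, S₁.le (b' + S₁.neg b) (d₂ c)) := by
  constructor
  · intro hexact b b' hb hb'
    obtain ⟨c, hc⟩ : b ∈ {b : M₁ | ∃ c : M₂, S₁.le b (d₂ c)} := hexact ▸ hb
    obtain ⟨c', hc'⟩ : b' ∈ {b : M₁ | ∃ c : M₂, S₁.le b (d₂ c)} := hexact ▸ hb'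
    exact ⟨_, hd₂.le_map_add_neg hc hc'⟩
  · intro htrivial
    refine Set.Subset.antisymm (fun b hb => ?_) (fun b ⟨c, hc⟩ => hchain b c hc)
    have hzero_cycle : S₀.le 0 (d₁ 0) := hchain 0 0 hd₂.zero_le_map_zero
    obtain ⟨c, hc⟩ := htrivial 0 b hzero_cycle hb
    rw [S₁.neg_zero, add_zero] at hc
    exact ⟨c, hc⟩

/-- For a ≽-chain of homomorphisms d₂ : M₂ → M₁, d₁ : M₁ → M₀, ≽-exactness at
M₁ holds if and only if the systemic homology at M₁ is trivial. -/
theorem exact_iff_systemic_homology_trivial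
    {M₂ M₁ M₀ : Type*} [AddCommMonoid M₂] [AddCommMonoid M₁] [AddCommMonoid M₀]
    (S₂ : NegModule M₂) (S₁ : NegModule M₁) (S₀ : NegModule M₀)
    (d₂ : M₂ → M₁) (d₁ : M₁ → M₀)
    (hd₂ : IsNegHom S₂ S₁ d₂) (hd₁ : IsNegHom S₁ S₀ d₁)
    (hchain : ∀ (b : M₁) (c : M₂), S₁.le b (d₂ c) → S₀.le 0 (d₁ b)) :
    ({b : M₁ | S₀.le 0 (d₁ b)} = {b : M₁ | ∃ c : M₂, S₁.le b (d₂ c)}) ↔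
      (∀ b b' : M₁, S₀.le 0 (d₁ b) → S₀.le 0 (d₁ b') →
        ∃ c : M₂, S₁.le (b' + S₁.neg b) (d₂ c)) :=
  exact_iff_systemic_homology_trivial_general S₂ S₁ S₀ d₂ d₁ hd₂ hchain
end

section
/- (Systemic connecting map.) Assume the snake set-up. Call a pair (v,u) ∈ N' × M admissible for x₀ ∈ ker h if x₀ ≼ p(v) and g(v) ≼ l(u). Then: (a) every x₀ ∈ ker h = {x ∈ L' : 0 ≼ h(x)} has an admissible pair; (b) if (v,u) and (v',u') are both admissible for x₀, then there exists y ∈ M' with f(y) ≼ u'(-)u; hence d(x₀) := [u]_f is a well-defined element of the systemic cokernel coker f_sys; (c) if moreover a monoid T acts on all six modules by additive maps commuting with negation and preserving ≼, and q, p, f, g, h, l, r are T-equivariant, then for any a ∈ T an admissible pair (v,u) for x₀ yields the admissible pair (a·v, a·u) for a·x₀, so d is T-equivariant. -/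
def IsTAction {T M : Type*} [Monoid T] [AddCommMonoid M]
    (SM : NegModule M) (sm : T → M → M) : Prop :=
  (∀ x : M, sm 1 x = x) ∧ (∀ (s t : T) (x : M), sm (s * t) x = sm s (sm t x)) ∧
    (∀ (t : T) (a b : M), sm t (a + b) = sm t a + sm t b) ∧
    (∀ t : T, sm t 0 = 0) ∧
    (∀ (t : T) (a : M), sm t (SM.neg a) = SM.neg (sm t a)) ∧
    (∀ (t : T) (a b : M), SM.le a b → SM.le (sm t a) (sm t b))

namespace NegModule

variable {M : Type*} [AddCommMonoid M] (S : NegModule M)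

theorem add_neg_le_add_neg {a a' b b' : M} (ha : S.le a a') (hb : S.le b b') :
    S.le (a + S.neg b) (a' + S.neg b') :=
  S.le_add _ _ _ _ ha (S.le_neg _ _ hb)

theorem zero_le_add_neg_of_le_of_le {x a b : M} (ha : S.le x a) (hb : S.le x b) :
    S.le 0 (b + S.neg a) :=
  S.le_trans _ _ _ (S.zero_le_circ x) (S.add_neg_le_add_neg hb ha)

end NegModule

section Accessors

variable {M N T : Type*} [AddCommMonoid M] [AddCommMonoid N] [Monoid T]
  {SM : NegModule M} {SN : NegModule N} {f : M → N}

theorem IsNegHom.map_add_neg_s12 (hf : IsNegHom SM SN f) (a b : M) :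
    f (a + SM.neg b) = f a + SN.neg (f b) := by
  rw [hf.2.2.1, hf.2.1]

theorem IsNegHom.mono (hf : IsNegHom SM SN f) {a b : M} (hab : SM.le a b) :
    SN.le (f a) (f b) :=
  hf.2.2.2 a b hab

theorem IsPrecMorphism.mono (hf : IsPrecMorphism SM SN f) {a b : M} (hab : SM.le a b) :
    SN.le (f a) (f b) :=
  hf.2.2.2 a b hab

theorem IsTAction.mono {sm : T → M → M} (hsm : IsTAction SM sm) (t : T) {a b : M}
    (hab : SM.le a b) : SM.le (sm t a) (sm t b) :=
  hsm.2.2.2.2.2 t a b hab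

end Accessors

theorem exists_admissible_pair {N' L' M N L : Type*} [AddCommMonoid L'] [AddCommMonoid N]
    [AddCommMonoid L] {SL' : NegModule L'} {SN : NegModule N} {SL : NegModule L}
    {p : N' → L'} {g : N' → N} {h : L' → L} {l : M → N} {r : N → L}
    (hh : IsPrecMorphism SL' SL h)
    (hcomm₂ : ∀ x : N', h (p x) = r (g x))
    (hp_onto : ∀ x : L', ∃ v : N', SL'.le x (p v))
    (hbot : ∀ b : N, SL.le 0 (r b) → ∃ c : M, SN.le b (l c))
    {x₀ : L'} (hx₀ : SL.le 0 (h x₀)) :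
    ∃ (v : N') (u : M), SL'.le x₀ (p v) ∧ SN.le (g v) (l u) := by
  obtain ⟨v, hv⟩ := hp_onto x₀
  have hgv : SL.le 0 (r (g v)) := hcomm₂ v ▸ SL.le_trans _ _ _ hx₀ (hh.mono hv)
  obtain ⟨u, hu⟩ := hbot _ hgv
  exact ⟨v, u, hv, hu⟩

theorem exists_map_le_add_neg_of_admissible {M' N' L' M N : Type*}
    [AddCommMonoid N'] [AddCommMonoid L'] [AddCommMonoid M] [AddCommMonoid N]
    {SN' : NegModule N'} {SL' : NegModule L'} {SM : NegModule M} {SN : NegModule N}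
    {q : M' → N'} {p : N' → L'} {f : M' → M} {g : N' → N} {l : M → N}
    (hp : IsNegHom SN' SL' p) (hg : IsNegHom SN' SN g) (hl : IsNegHom SM SN l)
    (hl_monic : ∀ b₀ b₁ : M, SN.le (l b₀) (l b₁) → SM.le b₀ b₁)
    (hcomm₁ : ∀ x : M', g (q x) = l (f x))
    (htop : ∀ b : N', SL'.le 0 (p b) → ∃ c : M', SN'.le (q c) b)
    {x₀ : L'} {v v' : N'} {u u' : M}
    (hv : SL'.le x₀ (p v)) (hu : SN.le (g v) (l u))
    (hv' : SL'.le x₀ (p v')) (hu' : SN.le (g v') (l u')) :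
    ∃ y : M', SM.le (f y) (u' + SM.neg u) := by
  have hdiff : SL'.le 0 (p (v' + SN'.neg v)) :=
    hp.map_add_neg_s12 v' v ▸ SL'.zero_le_add_neg_of_le_of_le hv hv'
  obtain ⟨c, hc⟩ := htop _ hdiff
  have hgc : SN.le (l (f c)) (g v' + SN.neg (g v)) := by
    rw [← hcomm₁, ← hg.map_add_neg_s12]
    exact hg.mono hc
  refine ⟨c, hl_monic _ _ ?_⟩
  rw [hl.map_add_neg_s12]
  exact SN.le_trans _ _ _ hgc (SN.add_neg_le_add_neg hu' hu)

theorem systemic_connecting_map_general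
    {M' N' L' M N L T : Type*}
    [AddCommMonoid N'] [AddCommMonoid L']
    [AddCommMonoid M] [AddCommMonoid N] [AddCommMonoid L] [Monoid T]
    (SN' : NegModule N') (SL' : NegModule L')
    (SM : NegModule M) (SN : NegModule N) (SL : NegModule L)
    (q : M' → N') (p : N' → L') (f : M' → M) (g : N' → N) (h : L' → L)
    (l : M → N) (r : N → L)
    (hp : IsNegHom SN' SL' p)
    (hg : IsNegHom SN' SN g)
    (hh : IsPrecMorphism SL' SL h) (hl : IsNegHom SM SN l)
    (hl_monic : ∀ b₀ b₁ : M, SN.le (l b₀) (l b₁) → SM.le b₀ b₁)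
    (hcomm₁ : ∀ x : M', g (q x) = l (f x))
    (hcomm₂ : ∀ x : N', h (p x) = r (g x))
    (hp_onto : ∀ x : L', ∃ v : N', SL'.le x (p v))
    (htop : {b : N' | SL'.le 0 (p b)} = {b : N' | ∃ c : M', SN'.le (q c) b})
    (hbot : {b : N | SL.le 0 (r b)} = {b : N | ∃ c : M, SN.le b (l c)})
    (smN' : T → N' → N') (smL' : T → L' → L')
    (smM : T → M → M) (smN : T → N → N)
    (hactL' : IsTAction SL' smL')
    (hactN : IsTAction SN smN)
    (heq_p : ∀ (t : T) (x : N'), p (smN' t x) = smL' t (p x))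
    (heq_g : ∀ (t : T) (x : N'), g (smN' t x) = smN t (g x))
    (heq_l : ∀ (t : T) (x : M), l (smM t x) = smN t (l x)) :
    -- (a) every x₀ ∈ ker h has an admissible pair
    (∀ x₀ : L', SL.le 0 (h x₀) →
      ∃ (v : N') (u : M), SL'.le x₀ (p v) ∧ SN.le (g v) (l u)) ∧
    -- (b) any two admissible pairs for x₀ give the same class in coker f_sys
    (∀ (x₀ : L') (v : N') (u : M) (v' : N') (u' : M), SL.le 0 (h x₀) →
      SL'.le x₀ (p v) → SN.le (g v) (l u) →
      SL'.le x₀ (p v') → SN.le (g v') (l u') →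
      ∃ y : M', SM.le (f y) (u' + SM.neg u)) ∧
    -- (c) the T-action carries admissible pairs to admissible pairs
    (∀ (a : T) (x₀ : L') (v : N') (u : M), SL.le 0 (h x₀) →
      SL'.le x₀ (p v) → SN.le (g v) (l u) →
      SL'.le (smL' a x₀) (p (smN' a v)) ∧
        SN.le (g (smN' a v)) (l (smM a u))) := by
  refine ⟨fun x₀ hx₀ => exists_admissible_pair hh hcomm₂ hp_onto
      (fun b => (Set.ext_iff.mp hbot b).mp) hx₀,
    fun x₀ v u v' u' _ hv hu hv' hu' => exists_map_le_add_neg_of_admissible hp hg hl hl_monic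
      hcomm₁ (fun b => (Set.ext_iff.mp htop b).mp) hv hu hv' hu',
    fun a x₀ v u _ hv hu => ⟨?_, ?_⟩⟩
  · rw [heq_p]
    exact hactL'.mono a hv
  · rw [heq_g, heq_l]
    exact hactN.mono a hu

/-- The systemic connecting map: (a) every element of ker h admits an
admissible pair; (b) any two admissible pairs give the same class in the
systemic cokernel of f; (c) admissible pairs are preserved by a T-action,
so the connecting map is T-equivariant. -/
theorem systemic_connecting_map
    {M' N' L' M N L T : Type*}
    [AddCommMonoid M'] [AddCommMonoid N'] [AddCommMonoid L']
    [AddCommMonoid M] [AddCommMonoid N] [AddCommMonoid L] [Monoid T]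
    (SM' : NegModule M') (SN' : NegModule N') (SL' : NegModule L')
    (SM : NegModule M) (SN : NegModule N) (SL : NegModule L)
    (q : M' → N') (p : N' → L') (f : M' → M) (g : N' → N) (h : L' → L)
    (l : M → N) (r : N → L)
    (hq : IsPrecMorphism SM' SN' q) (hp : IsNegHom SN' SL' p)
    (hf : IsPrecMorphism SM' SM f) (hg : IsNegHom SN' SN g)
    (hh : IsPrecMorphism SL' SL h) (hl : IsNegHom SM SN l)
    (hr : IsPrecMorphism SN SL r)
    (hl_monic : ∀ b₀ b₁ : M, SN.le (l b₀) (l b₁) → SM.le b₀ b₁)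
    (hcomm₁ : ∀ x : M', g (q x) = l (f x))
    (hcomm₂ : ∀ x : N', h (p x) = r (g x))
    (hp_onto : ∀ x : L', ∃ v : N', SL'.le x (p v))
    (htop : {b : N' | SL'.le 0 (p b)} = {b : N' | ∃ c : M', SN'.le (q c) b})
    (hbot : {b : N | SL.le 0 (r b)} = {b : N | ∃ c : M, SN.le b (l c)})
    (smM' : T → M' → M') (smN' : T → N' → N') (smL' : T → L' → L')
    (smM : T → M → M) (smN : T → N → N) (smL : T → L → L)
    (hactM' : IsTAction SM' smM') (hactN' : IsTAction SN' smN')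
    (hactL' : IsTAction SL' smL') (hactM : IsTAction SM smM)
    (hactN : IsTAction SN smN) (hactL : IsTAction SL smL)
    (heq_q : ∀ (t : T) (x : M'), q (smM' t x) = smN' t (q x))
    (heq_p : ∀ (t : T) (x : N'), p (smN' t x) = smL' t (p x))
    (heq_f : ∀ (t : T) (x : M'), f (smM' t x) = smM t (f x))
    (heq_g : ∀ (t : T) (x : N'), g (smN' t x) = smN t (g x))
    (heq_h : ∀ (t : T) (x : L'), h (smL' t x) = smL t (h x))
    (heq_l : ∀ (t : T) (x : M), l (smM t x) = smN t (l x))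
    (heq_r : ∀ (t : T) (x : N), r (smN t x) = smL t (r x)) :
    -- (a) every x₀ ∈ ker h has an admissible pair
    (∀ x₀ : L', SL.le 0 (h x₀) →
      ∃ (v : N') (u : M), SL'.le x₀ (p v) ∧ SN.le (g v) (l u)) ∧
    -- (b) any two admissible pairs for x₀ give the same class in coker f_sys
    (∀ (x₀ : L') (v : N') (u : M) (v' : N') (u' : M), SL.le 0 (h x₀) →
      SL'.le x₀ (p v) → SN.le (g v) (l u) →
      SL'.le x₀ (p v') → SN.le (g v') (l u') →
      ∃ y : M', SM.le (f y) (u' + SM.neg u)) ∧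
    -- (c) the T-action carries admissible pairs to admissible pairs
    (∀ (a : T) (x₀ : L') (v : N') (u : M), SL.le 0 (h x₀) →
      SL'.le x₀ (p v) → SN.le (g v) (l u) →
      SL'.le (smL' a x₀) (p (smN' a v)) ∧
        SN.le (g (smN' a v)) (l (smM a u))) :=
  systemic_connecting_map_general SN' SL' SM SN SL q p f g h l r hp hg hh hl hl_monic hcomm₁ hcomm₂
    hp_onto htop hbot smN' smL' smM smN hactL' hactN heq_p heq_g heq_l
end

section
/- Let f : X → Y be a homomorphism of ∘-idempotent modules with negation. Define the relation Φ on Y by: y Φ y' if and only if g(y) = g(y') for every ∘-idempotent module with negation Z and every homomorphism g : Y → Z such that g(f(x)) ∈ Z° for all x ∈ X. Then: (1) Φ is an equivalence relation compatible with addition and with the negation map, so the quotient Y/Φ is a module with negation, and Y/Φ is ∘-idempotent; (2) [f(c)] = [f(c)°] in Y/Φ for every c ∈ X; (3) for every ∘-idempotent module with negation Z and every homomorphism h : Y → Z with h(f(x)) ∈ Z° for all x ∈ X, there is a unique homomorphism h̃ : Y/Φ → Z with h̃ ∘ π = h, where π : Y → Y/Φ is the projection. (Thus π is an N-cokernel of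 f in the category of ∘-idempotent modules with negation, with null morphisms those landing in quasi-zeros.) -/
universe u u' v

/-- A negation map on an additive commutative monoid: an additive monoid
automorphism of order ≤ 2. -/
structure Negation (M : Type*) [AddCommMonoid M] where
  neg : M → M
  neg_add : ∀ a b : M, neg (a + b) = neg a + neg b
  neg_zero : neg 0 = 0
  neg_neg : ∀ a : M, neg (neg a) = a

/-- ∘-idempotence: (b°)° = b° for every b, where b° = b + (-)b. -/
def CircIdem {M : Type*} [AddCommMonoid M] (nM : Negation M) : Prop :=
  ∀ b : M, (b + nM.neg b) + nM.neg (b + nM.neg b) = b + nM.neg b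

/-- A homomorphism of modules with negation. -/
def IsNegAddHom {X Y : Type*} [AddCommMonoid X] [AddCommMonoid Y]
    (nX : Negation X) (nY : Negation Y) (f : X → Y) : Prop :=
  f 0 = 0 ∧ (∀ a b : X, f (a + b) = f a + f b) ∧
    (∀ a : X, f (nX.neg a) = nY.neg (f a))

theorem IsNegAddHom.map_add_neg {Y Z : Type*} [AddCommMonoid Y] [AddCommMonoid Z]
    {nY : Negation Y} {nZ : Negation Z} {g : Y → Z}
    (hg : IsNegAddHom nY nZ g) (b : Y) : g (b + nY.neg b) = g b + nZ.neg (g b) := by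
  rw [hg.2.1, hg.2.2]

/-- The relation `Φ` whose quotient `Y/Φ` is the N-cokernel of `f`. -/
def CokernelRel.{w} {X Y : Type*} [AddCommMonoid Y] (nY : Negation Y) (f : X → Y) (y y' : Y) :
    Prop :=
  ∀ (Z : Type w) [AddCommMonoid Z], ∀ (nZ : Negation Z), CircIdem nZ →
    ∀ g : Y → Z, IsNegAddHom nY nZ g →
      (∀ x : X, ∃ z : Z, g (f x) = z + nZ.neg z) → g y = g y'

namespace CokernelRel

variable {X Y : Type*} [AddCommMonoid Y] {nY : Negation Y} {f : X → Y}

theorem equivalence : Equivalence (CokernelRel.{v} nY f) where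
  refl _ _ _ _ _ _ _ _ := rfl
  symm h Z _ nZ hZ g hg hnull := (h Z nZ hZ g hg hnull).symm
  trans h₁ h₂ Z _ nZ hZ g hg hnull := (h₁ Z nZ hZ g hg hnull).trans (h₂ Z nZ hZ g hg hnull)

theorem add {y₁ y₁' y₂ y₂' : Y}
    (h₁ : CokernelRel.{v} nY f y₁ y₁') (h₂ : CokernelRel.{v} nY f y₂ y₂') :
    CokernelRel.{v} nY f (y₁ + y₂) (y₁' + y₂') := by
  intro Z _ nZ hZ g hg hnull
  rw [hg.2.1, hg.2.1, h₁ Z nZ hZ g hg hnull, h₂ Z nZ hZ g hg hnull]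

theorem neg {y y' : Y} (h : CokernelRel.{v} nY f y y') :
    CokernelRel.{v} nY f (nY.neg y) (nY.neg y') := by
  intro Z _ nZ hZ g hg hnull
  rw [hg.2.2, hg.2.2, h Z nZ hZ g hg hnull]

theorem circ_circ (y : Y) :
    CokernelRel.{v} nY f ((y + nY.neg y) + nY.neg (y + nY.neg y)) (y + nY.neg y) := by
  intro Z _ nZ hZ g hg _
  rw [hg.map_add_neg, hg.map_add_neg]
  exact hZ (g y)

/-- A quasi-zero `z + (-)z` of a ∘-idempotent module is its own `∘`. -/
theorem apply_add_neg (c : X) : CokernelRel.{v} nY f (f c) (f c + nY.neg (f c)) := by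
  intro Z _ nZ hZ g hg hnull
  obtain ⟨z, hz⟩ := hnull c
  rw [hg.map_add_neg, hz]
  exact (hZ z).symm

theorem existsUnique_lift {Z : Type v} [AddCommMonoid Z] {nZ : Negation Z} (hZ : CircIdem nZ)
    {h : Y → Z} (hh : IsNegAddHom nY nZ h)
    (hnull : ∀ x : X, ∃ z : Z, h (f x) = z + nZ.neg z) :
    ∃! htilde : Quot (CokernelRel.{v} nY f) → Z, ∀ y : Y, htilde (Quot.mk _ y) = h y :=
  ⟨Quot.lift h fun _ _ hyy' => hyy' Z nZ hZ h hh hnull, fun _ => rfl,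
    fun _ hg => funext (Quot.ind hg)⟩

end CokernelRel

theorem circ_idempotent_cokernel_general
    {X : Type u} {Y : Type u'} [AddCommMonoid Y]
    (nY : Negation Y)
    (f : X → Y) :
    let Φ : Y → Y → Prop := fun y y' =>
      ∀ (Z : Type v) [AddCommMonoid Z], ∀ (nZ : Negation Z), CircIdem nZ →
        ∀ g : Y → Z, IsNegAddHom nY nZ g →
          (∀ x : X, ∃ z : Z, g (f x) = z + nZ.neg z) → g y = g y'
    -- (1) Φ is a congruence and the quotient is a ∘-idempotent module
    -- with negation
    Equivalence Φ ∧
    (∀ y₁ y₁' y₂ y₂' : Y, Φ y₁ y₁' → Φ y₂ y₂' → Φ (y₁ + y₂) (y₁' + y₂')) ∧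
    (∀ y y' : Y, Φ y y' → Φ (nY.neg y) (nY.neg y')) ∧
    (∀ y : Y, Φ ((y + nY.neg y) + nY.neg (y + nY.neg y)) (y + nY.neg y)) ∧
    -- (2) [f(c)] = [f(c)°] in Y/Φ
    (∀ c : X, Φ (f c) (f c + nY.neg (f c))) ∧
    -- (3) the universal property of the N-cokernel
    (∀ (Z : Type v) [AddCommMonoid Z], ∀ (nZ : Negation Z), CircIdem nZ →
      ∀ h : Y → Z, IsNegAddHom nY nZ h →
        (∀ x : X, ∃ z : Z, h (f x) = z + nZ.neg z) →
        ∃! htilde : Quot Φ → Z, ∀ y : Y, htilde (Quot.mk Φ y) = h y) :=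
  ⟨CokernelRel.equivalence, fun _ _ _ _ => CokernelRel.add, fun _ _ => CokernelRel.neg,
    CokernelRel.circ_circ, CokernelRel.apply_add_neg,
    fun _ _ _ hZ _ hh hnull => CokernelRel.existsUnique_lift hZ hh hnull⟩

/-- The N-cokernel of a homomorphism of ∘-idempotent modules with negation:
the relation Φ is a congruence, the quotient is ∘-idempotent, [f(c)] = [f(c)°],
and the projection Y → Y/Φ satisfies the universal property of the N-cokernel
(null morphisms are those landing in quasi-zeros). -/
theorem circ_idempotent_cokernel
    {X : Type u} {Y : Type u'} [AddCommMonoid X] [AddCommMonoid Y]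
    (nX : Negation X) (nY : Negation Y)
    (hX : CircIdem nX) (hY : CircIdem nY)
    (f : X → Y) (hf : IsNegAddHom nX nY f) :
    let Φ : Y → Y → Prop := fun y y' =>
      ∀ (Z : Type v) [AddCommMonoid Z], ∀ (nZ : Negation Z), CircIdem nZ →
        ∀ g : Y → Z, IsNegAddHom nY nZ g →
          (∀ x : X, ∃ z : Z, g (f x) = z + nZ.neg z) → g y = g y'
    -- (1) Φ is a congruence and the quotient is a ∘-idempotent module
    -- with negation
    Equivalence Φ ∧
    (∀ y₁ y₁' y₂ y₂' : Y, Φ y₁ y₁' → Φ y₂ y₂' → Φ (y₁ + y₂) (y₁' + y₂')) ∧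
    (∀ y y' : Y, Φ y y' → Φ (nY.neg y) (nY.neg y')) ∧
    (∀ y : Y, Φ ((y + nY.neg y) + nY.neg (y + nY.neg y)) (y + nY.neg y)) ∧
    -- (2) [f(c)] = [f(c)°] in Y/Φ
    (∀ c : X, Φ (f c) (f c + nY.neg (f c))) ∧
    -- (3) the universal property of the N-cokernel
    (∀ (Z : Type v) [AddCommMonoid Z], ∀ (nZ : Negation Z), CircIdem nZ →
      ∀ h : Y → Z, IsNegAddHom nY nZ h →
        (∀ x : X, ∃ z : Z, h (f x) = z + nZ.neg z) →
        ∃! htilde : Quot Φ → Z, ∀ y : Y, htilde (Quot.mk Φ y) = h y) :=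
  circ_idempotent_cokernel_general nY f
end
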